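/- Let G be a simple, undirected, connected graph on n nodes, 0 < ε < 1/n, and let W ∈ ℝ^{n×n} be defined by W_{ij} = ε for {i,j} ∈ E(G), W_{ii} = 1 − |N_i|ε, and W_{ij} = 0 otherwise. For i = 1,…,n let P_i : ℝ^d → ℝ^d be the orthogonal projection onto a linear subspace L_i ⊆ ℝ^d, let P = diag(P_1,…,P_n) act blockwise on ℝ^{nd}, and let W act blockwise as (Wu)_i = Σ_j W_{ij} u_j. Then: (A) every eigenvalue λ of the linear map PW on ℝ^{nd} with λ ≠ 1 satisfies |λ| < 1; and (B) every eigenvector of PW corresponding to eigenvalue 1 has the form 1_n ⊗ h for some h ∈ ∩_{i=1}^n L_i, i.e., all n blocks are equal to a common vector fixed by each P_i. -/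

import Mathlib

noncomputable section

open Filter MeasureTheory Finset

/-- The integer (0-indexed) associated with a Boolean vector `x ∈ {0,1}^m`:
`⌊x⌋ - 1 = ∑_{k=1}^m x_k 2^{m-k}` (so the 1-indexed `⌊x⌋` is `flr m x + 1`). -/
def flr (m : ℕ) (x : Fin m → Bool) : ℕ :=
  ∑ k : Fin m, if x k then 2 ^ (m - 1 - (k : ℕ)) else 0

/-- `deltaVec c i` is the `i`-th column of the `c × c` identity matrix (0-indexed). -/
def deltaVec (c : ℕ) (i : Fin c) : Fin c → ℝ := fun j => if j = i then 1 else 0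

/-- `Δ_c`, the set of Boolean vectors in `ℝ^c`. -/
def DeltaSet (c : ℕ) : Set (Fin c → ℝ) := Set.range (deltaVec c)

/-- `Θ_m : {0,1}^m → Δ_{2^m}`, `Θ_m(x) = δ_{2^m}^{⌊x⌋}`. -/
def theta (m : ℕ) (x : Fin m → Bool) : Fin (2 ^ m) → ℝ :=
  fun j => if (j : ℕ) = flr m x then 1 else 0

/-- `Υ_m : Δ_{2^m} → {0,1}^m`, the inverse of `Θ_m`. -/
def upsilon (m : ℕ) : (Fin (2 ^ m) → ℝ) → (Fin m → Bool) :=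
  Function.invFun (theta m)

/-- Euclidean distance on `ℝ^N`. -/
def euclDist {N : ℕ} (x y : Fin N → ℝ) : ℝ := Real.sqrt (∑ j, (x j - y j) ^ 2)

/-- Euclidean distance from a point to a set in `ℝ^N`. -/
def distToSet {N : ℕ} (z : Fin N → ℝ) (S : Set (Fin N → ℝ)) : ℝ :=
  sInf (euclDist z '' S)

/-- `P` is the (orthogonal/metric) projection onto the set `S ⊆ ℝ^N`: it maps every point to
a nearest point of `S` in the Euclidean distance. -/
def IsProjOn {N : ℕ} (P : (Fin N → ℝ) → (Fin N → ℝ)) (S : Set (Fin N → ℝ)) : Prop :=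
  ∀ z, P z ∈ S ∧ ∀ w ∈ S, euclDist z (P z) ≤ euclDist z w

/-- The uniform distribution on the cube `[0,1]^d`. -/
def uniformCube (d : ℕ) : Measure (Fin d → ℝ) :=
  volume.restrict (Set.univ.pi fun _ => Set.Icc (0 : ℝ) 1)

/-!
Measure vectors of `ℝ^{nd}` by the energy `∑ᵢ ‖uᵢ‖²` of their blocks. Since `W` is doubly
stochastic, the energy of `u` is that of `Wu` plus the variance term
`∑ᵢ ∑ⱼ Wᵢⱼ ‖uⱼ - (Wu)ᵢ‖²`, and a nearest-point projection onto a subspace satisfies Pythagoras;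
hence `PW` does not increase the energy. Equality forces the variance to vanish, so every block
equals its neighbours' (the diagonal and edge weights are positive) and, `G` being connected,
all blocks equal a common `h`; it also forces each `Pᵢ` to fix `h`, so `h ∈ Lᵢ`. For a complex
eigenvector the same applies to its real and imaginary parts, giving `|λ| ≤ 1` with equality
only when the eigenvector is fixed, i.e. `λ = 1`.
-/

open Matrix
open scoped InnerProductSpace

section NearestPoint

variable {E : Type*} [NormedAddCommGroup E] [InnerProductSpace ℝ E]

def IsNearestPointMap (K : Submodule ℝ E) (Q : E → E) : Prop :=
  ∀ z, Q z ∈ K ∧ ∀ w ∈ K, ‖z - Q z‖ ≤ ‖z - w‖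

namespace IsNearestPointMap

variable {K : Submodule ℝ E} {Q : E → E}

theorem norm_sq_eq (hQ : IsNearestPointMap K Q) (z : E) :
    ‖z‖ ^ 2 = ‖Q z‖ ^ 2 + ‖z - Q z‖ ^ 2 := by
  obtain ⟨hmem, hmin⟩ := hQ z
  have horth : ⟪z - Q z, Q z⟫_ℝ = 0 := by
    refine (K.norm_eq_iInf_iff_real_inner_eq_zero hmem).1 ?_ _ hmem
    have : Nonempty K := ⟨⟨_, hmem⟩⟩
    exact le_antisymm (le_ciInf fun w => hmin w w.2)
      (ciInf_le (f := fun w : (K : Set E) => ‖z - w‖)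
        ⟨0, Set.forall_mem_range.2 fun _ => norm_nonneg _⟩ ⟨_, hmem⟩)
  have h := norm_add_sq_real (Q z) (z - Q z)
  rw [add_sub_cancel, real_inner_comm, horth] at h
  rw [h]
  ring

theorem norm_sq_apply_le (hQ : IsNearestPointMap K Q) (z : E) : ‖Q z‖ ^ 2 ≤ ‖z‖ ^ 2 := by
  rw [hQ.norm_sq_eq z]
  exact le_add_of_nonneg_right (sq_nonneg _)

theorem apply_eq_self_of_norm_sq_eq (hQ : IsNearestPointMap K Q) {z : E}
    (h : ‖Q z‖ ^ 2 = ‖z‖ ^ 2) : Q z = z := by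
  have := hQ.norm_sq_eq z
  rw [eq_comm, ← sub_eq_zero, ← norm_eq_zero]
  nlinarith [norm_nonneg (z - Q z)]

theorem apply_eq_self_of_mem (hQ : IsNearestPointMap K Q) {z : E} (hz : z ∈ K) : Q z = z := by
  have := (hQ z).2 z hz
  rw [sub_self, norm_zero, norm_le_zero_iff, sub_eq_zero] at this
  exact this.symm

end IsNearestPointMap

theorem euclDist_eq_norm {N : ℕ} (x y : Fin N → ℝ) :
    euclDist x y = ‖WithLp.toLp 2 x - WithLp.toLp 2 y‖ := by
  rw [← dist_eq_norm, EuclideanSpace.dist_eq]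
  simp [euclDist, Real.dist_eq, sq_abs]

theorem IsProjOn.isNearestPointMap {N : ℕ} {P : (Fin N → ℝ) → (Fin N → ℝ)}
    {L : Submodule ℝ (Fin N → ℝ)} (hP : IsProjOn P L) :
    IsNearestPointMap (L.comap (WithLp.linearEquiv 2 ℝ (Fin N → ℝ)).toLinearMap)
      (fun z => WithLp.toLp 2 (P (WithLp.ofLp z))) := fun z =>
  ⟨(hP z.ofLp).1, fun w hw => by simpa [euclDist_eq_norm] using (hP z.ofLp).2 w.ofLp hw⟩

end NearestPoint

theorem SimpleGraph.Preconnected.eq_of_forall_adj {V α : Type*} {G : SimpleGraph V}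
    (hG : G.Preconnected) {f : V → α} (h : ∀ i j, G.Adj i j → f i = f j) (i j : V) :
    f i = f j := by
  obtain ⟨w⟩ := hG i j
  induction w with
  | nil => rfl
  | cons hadj _ ih => exact (h _ _ hadj).trans ih

section ConsensusMatrix

variable {V : Type*} [Fintype V]

theorem SimpleGraph.degree_mul_lt_one (G : SimpleGraph V) [DecidableRel G.Adj] {ε : ℝ}
    (hε : 0 < ε) (hεV : ε < 1 / Fintype.card V) (i : V) : G.degree i * ε < 1 := by
  have hV : (0 : ℝ) < Fintype.card V := by exact_mod_cast Fintype.card_pos_iff.2 ⟨i⟩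
  calc G.degree i * ε < Fintype.card V * ε :=
        mul_lt_mul_of_pos_right (by exact_mod_cast G.degree_lt_card_verts i) hε
    _ < 1 := by rwa [lt_div_iff₀ hV, mul_comm] at hεV

variable [DecidableEq V]

structure IsConsensusMatrix (G : SimpleGraph V) (W : Matrix V V ℝ) : Prop where
  mem_doublyStochastic : W ∈ doublyStochastic ℝ V
  diag_pos : ∀ i, 0 < W i i
  pos_of_adj : ∀ ⦃i j⦄, G.Adj i j → 0 < W i j

namespace SimpleGraph

variable (G : SimpleGraph V) [DecidableRel G.Adj]

theorem one_sub_smul_lapMatrix_apply (ε : ℝ) (i j : V) :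
    (1 - ε • G.lapMatrix ℝ) i j =
      if i = j then 1 - G.degree i * ε else if G.Adj i j then ε else 0 := by
  by_cases h : i = j
  · subst h; simp [lapMatrix, degMatrix, mul_comm]
  · by_cases hadj : G.Adj i j <;> simp [lapMatrix, degMatrix, h, hadj]

theorem isConsensusMatrix_one_sub_smul_lapMatrix {ε : ℝ} (hε : 0 < ε)
    (hdeg : ∀ i, G.degree i * ε < 1) : IsConsensusMatrix G (1 - ε • G.lapMatrix ℝ) where
  mem_doublyStochastic := by
    have hrow : (1 - ε • G.lapMatrix ℝ) *ᵥ 1 = 1 := by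
      rw [sub_mulVec, one_mulVec, smul_mulVec, Pi.one_def, lapMatrix_mulVec_const_eq_zero,
        smul_zero, sub_zero]
    refine mem_doublyStochastic.2 ⟨fun i j => ?_, hrow, ?_⟩
    · rw [one_sub_smul_lapMatrix_apply]
      split_ifs
      exacts [by linarith [hdeg i], hε.le, le_rfl]
    · have hsymm : (1 - ε • G.lapMatrix ℝ).IsSymm :=
        isSymm_one.sub ((G.isSymm_lapMatrix ℝ).smul ε)
      rw [← hsymm.eq, vecMul_transpose, hrow]
  diag_pos i := by rw [one_sub_smul_lapMatrix_apply, if_pos rfl]; linarith [hdeg i]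
  pos_of_adj i j h := by rw [one_sub_smul_lapMatrix_apply, if_neg h.ne, if_pos h]; exact hε

end SimpleGraph

end ConsensusMatrix

section Mixing

variable {E : Type*} [NormedAddCommGroup E] [InnerProductSpace ℝ E] {ι : Type*} [Fintype ι]

theorem sum_norm_sq_eq_sum_norm_sq_mix_add {W : Matrix ι ι ℝ} (hrow : ∀ i, ∑ j, W i j = 1)
    (hcol : ∀ j, ∑ i, W i j = 1) (x : ι → E) :
    ∑ j, ‖x j‖ ^ 2 =
      ∑ i, ‖∑ j, W i j • x j‖ ^ 2 + ∑ i, ∑ j, W i j * ‖x j - ∑ k, W i k • x k‖ ^ 2 := by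
  have hrowwise : ∀ i, ∑ j, W i j * ‖x j - ∑ k, W i k • x k‖ ^ 2 =
      ∑ j, W i j * ‖x j‖ ^ 2 - ‖∑ j, W i j • x j‖ ^ 2 := by
    intro i
    have hm : ∑ j, W i j * ⟪x j, ∑ k, W i k • x k⟫_ℝ = ‖∑ k, W i k • x k‖ ^ 2 := by
      simp only [← real_inner_smul_left, ← sum_inner, real_inner_self_eq_norm_sq]
    simp_rw [norm_sub_sq_real, mul_add, mul_sub, sum_add_distrib, sum_sub_distrib, ← sum_mul,
      hrow, mul_left_comm _ (2 : ℝ), ← mul_sum, hm]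
    ring
  have hswap : ∑ i, ∑ j, W i j * ‖x j‖ ^ 2 = ∑ j, ‖x j‖ ^ 2 := by
    rw [sum_comm]
    simp_rw [← sum_mul, hcol, one_mul]
  simp_rw [hrowwise, sum_sub_distrib, hswap]
  ring

variable [DecidableEq ι] {W : Matrix ι ι ℝ}

theorem sum_norm_sq_mix_le (hW : W ∈ doublyStochastic ℝ ι) (x : ι → E) :
    ∑ i, ‖∑ j, W i j • x j‖ ^ 2 ≤ ∑ j, ‖x j‖ ^ 2 := by
  rw [sum_norm_sq_eq_sum_norm_sq_mix_add (sum_row_of_mem_doublyStochastic hW)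
    (sum_col_of_mem_doublyStochastic hW) x]
  exact le_add_of_nonneg_right <| sum_nonneg fun i _ => sum_nonneg fun j _ =>
    mul_nonneg (nonneg_of_mem_doublyStochastic hW) (sq_nonneg _)

theorem IsConsensusMatrix.eq_of_sum_norm_sq_mix_eq {G : SimpleGraph ι}
    (hW : IsConsensusMatrix G W) (hG : G.Preconnected) {x : ι → E}
    (h : ∑ i, ‖∑ j, W i j • x j‖ ^ 2 = ∑ j, ‖x j‖ ^ 2) : ∀ i j, x i = x j := by
  have hds := hW.mem_doublyStochastic
  rw [sum_norm_sq_eq_sum_norm_sq_mix_add (sum_row_of_mem_doublyStochastic hds)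
    (sum_col_of_mem_doublyStochastic hds) x, left_eq_add] at h
  have hnonneg : ∀ i j, 0 ≤ W i j * ‖x j - ∑ k, W i k • x k‖ ^ 2 := fun i j =>
    mul_nonneg (nonneg_of_mem_doublyStochastic hds) (sq_nonneg _)
  have hmean : ∀ i j, 0 < W i j → x j = ∑ k, W i k • x k := by
    intro i j hij
    have := (sum_eq_zero_iff_of_nonneg fun j _ => hnonneg i j).1
      ((sum_eq_zero_iff_of_nonneg fun i _ => sum_nonneg fun j _ => hnonneg i j).1 h i
        (mem_univ i)) j (mem_univ j)
    rwa [mul_eq_zero, or_iff_right hij.ne', sq_eq_zero_iff, norm_eq_zero, sub_eq_zero] at this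
  refine hG.eq_of_forall_adj fun i j hadj => ?_
  rw [hmean i i (hW.diag_pos i), hmean i j (hW.pos_of_adj hadj)]

def projMix (Q : ι → E → E) (W : Matrix ι ι ℝ) (x : ι → E) (i : ι) : E :=
  Q i (∑ j, W i j • x j)

variable {K : ι → Submodule ℝ E} {Q : ι → E → E}

theorem sum_norm_sq_projMix_le (hQ : ∀ i, IsNearestPointMap (K i) (Q i))
    (hW : W ∈ doublyStochastic ℝ ι) (x : ι → E) :
    ∑ i, ‖projMix Q W x i‖ ^ 2 ≤ ∑ i, ‖x i‖ ^ 2 :=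
  (sum_le_sum fun i _ => (hQ i).norm_sq_apply_le _).trans (sum_norm_sq_mix_le hW x)

theorem projMix_const (hQ : ∀ i, IsNearestPointMap (K i) (Q i))
    (hW : W ∈ doublyStochastic ℝ ι) {c : E} (hc : ∀ i, c ∈ K i) :
    projMix Q W (fun _ => c) = fun _ => c := by
  funext i
  rw [projMix, ← sum_smul, sum_row_of_mem_doublyStochastic hW, one_smul,
    (hQ i).apply_eq_self_of_mem (hc i)]

theorem exists_forall_eq_of_sum_norm_sq_projMix_eq (hQ : ∀ i, IsNearestPointMap (K i) (Q i))
    {G : SimpleGraph ι} (hW : IsConsensusMatrix G W) (hG : G.Connected) {x : ι → E}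
    (h : ∑ i, ‖projMix Q W x i‖ ^ 2 = ∑ i, ‖x i‖ ^ 2) :
    ∃ c, (∀ i, c ∈ K i) ∧ ∀ i, x i = c := by
  unfold projMix at h
  have hds := hW.mem_doublyStochastic
  have hproj := sum_le_sum fun i (_ : i ∈ univ) => (hQ i).norm_sq_apply_le (∑ j, W i j • x j)
  have hmix := sum_norm_sq_mix_le hds x
  have hconst := hW.eq_of_sum_norm_sq_mix_eq hG.preconnected (by linarith)
  have hfix := (sum_eq_sum_iff_of_le fun i (_ : i ∈ univ) => (hQ i).norm_sq_apply_le _).1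
    (by linarith)
  obtain ⟨i₀⟩ := hG.nonempty
  refine ⟨x i₀, fun i => ?_, fun i => hconst i i₀⟩
  have hmean : ∑ j, W i j • x j = x i₀ := by
    simp_rw [hconst _ i₀, ← sum_smul, sum_row_of_mem_doublyStochastic hds, one_smul]
  rw [← hmean, ← (hQ i).apply_eq_self_of_norm_sq_eq (hfix i (mem_univ i))]
  exact ((hQ i) _).1

theorem projMix_eq_self_of_sum_norm_sq_eq (hQ : ∀ i, IsNearestPointMap (K i) (Q i))
    {G : SimpleGraph ι} (hW : IsConsensusMatrix G W) (hG : G.Connected) {x : ι → E}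
    (h : ∑ i, ‖projMix Q W x i‖ ^ 2 = ∑ i, ‖x i‖ ^ 2) : projMix Q W x = x := by
  obtain ⟨c, hc, hx⟩ := exists_forall_eq_of_sum_norm_sq_projMix_eq hQ hW hG h
  obtain rfl : x = fun _ => c := funext hx
  exact projMix_const hQ hW.mem_doublyStochastic hc

end Mixing

section Blocks

def blocks {ι κ : Type*} (u : ι × κ → ℝ) (i : ι) : EuclideanSpace ℝ κ :=
  WithLp.toLp 2 fun a => u (i, a)

theorem blocks_injective {ι κ : Type*} :
    Function.Injective (blocks : (ι × κ → ℝ) → ι → EuclideanSpace ℝ κ) :=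
  fun u v h => funext fun p => by simpa [blocks] using congr($h p.1 p.2)

variable {ι κ : Type*} [Fintype ι] [Fintype κ]

theorem sum_sq_eq_sum_norm_sq_blocks (u : ι × κ → ℝ) :
    ∑ p, u p ^ 2 = ∑ i, ‖blocks u i‖ ^ 2 := by
  simp [blocks, EuclideanSpace.real_norm_sq_eq, Fintype.sum_prod_type]

theorem blocks_mulVec {A : Matrix (ι × κ) (ι × κ) ℝ} {W : Matrix ι ι ℝ} {P : ι → Matrix κ κ ℝ}
    (hA : ∀ p q, A p q = W p.1 q.1 * P p.1 p.2 q.2) (u : ι × κ → ℝ) :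
    blocks (A *ᵥ u) = projMix (fun i z => WithLp.toLp 2 (P i *ᵥ z.ofLp)) W (blocks u) := by
  funext i
  ext a
  simp only [blocks, projMix, mulVec, dotProduct, hA, Fintype.sum_prod_type]
  simp only [WithLp.ofLp_sum, WithLp.ofLp_smul, Finset.sum_apply, Pi.smul_apply, smul_eq_mul,
    mul_sum]
  rw [sum_comm]
  exact sum_congr rfl fun j _ => sum_congr rfl fun b _ => by ring

end Blocks

section Complexification

variable {ι : Type*} [Fintype ι]

theorem re_mulVec_map_ofReal (A : Matrix ι ι ℝ) (v : ι → ℂ) (p : ι) :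
    ((A.map (fun r => (r : ℂ)) *ᵥ v) p).re = (A *ᵥ fun q => (v q).re) p := by
  simp [mulVec, dotProduct, Complex.re_sum]

theorem im_mulVec_map_ofReal (A : Matrix ι ι ℝ) (v : ι → ℂ) (p : ι) :
    ((A.map (fun r => (r : ℂ)) *ᵥ v) p).im = (A *ᵥ fun q => (v q).im) p := by
  simp [mulVec, dotProduct, Complex.im_sum]

theorem sum_norm_sq_eq_sum_re_sq_add_sum_im_sq (v : ι → ℂ) :
    ∑ p, ‖v p‖ ^ 2 = ∑ p, (v p).re ^ 2 + ∑ p, (v p).im ^ 2 := by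
  rw [← sum_add_distrib]
  congr with p
  rw [Complex.sq_norm, Complex.normSq_apply]
  ring

variable {A : Matrix ι ι ℝ}

theorem sum_norm_sq_mulVec_map_ofReal_le (hle : ∀ u, ∑ p, (A *ᵥ u) p ^ 2 ≤ ∑ p, u p ^ 2)
    (v : ι → ℂ) :
    ∑ p, ‖(A.map (fun r => (r : ℂ)) *ᵥ v) p‖ ^ 2 ≤ ∑ p, ‖v p‖ ^ 2 := by
  simp only [sum_norm_sq_eq_sum_re_sq_add_sum_im_sq, re_mulVec_map_ofReal, im_mulVec_map_ofReal]
  exact add_le_add (hle _) (hle _)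

theorem mulVec_map_ofReal_eq_self_of_sum_norm_sq_eq
    (hle : ∀ u, ∑ p, (A *ᵥ u) p ^ 2 ≤ ∑ p, u p ^ 2)
    (hfix : ∀ u, ∑ p, (A *ᵥ u) p ^ 2 = ∑ p, u p ^ 2 → A *ᵥ u = u) {v : ι → ℂ}
    (h : ∑ p, ‖(A.map (fun r => (r : ℂ)) *ᵥ v) p‖ ^ 2 = ∑ p, ‖v p‖ ^ 2) :
    A.map (fun r => (r : ℂ)) *ᵥ v = v := by
  simp only [sum_norm_sq_eq_sum_re_sq_add_sum_im_sq, re_mulVec_map_ofReal,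
    im_mulVec_map_ofReal] at h
  have hre := hfix (fun q => (v q).re) <| by
    linarith [hle fun q => (v q).re, hle fun q => (v q).im]
  have him := hfix (fun q => (v q).im) <| by
    linarith [hle fun q => (v q).re, hle fun q => (v q).im]
  funext p
  apply Complex.ext
  · rw [re_mulVec_map_ofReal, hre]
  · rw [im_mulVec_map_ofReal, him]

theorem norm_lt_one_of_hasEigenvalue [DecidableEq ι]
    (hle : ∀ u, ∑ p, (A *ᵥ u) p ^ 2 ≤ ∑ p, u p ^ 2)
    (hfix : ∀ u, ∑ p, (A *ᵥ u) p ^ 2 = ∑ p, u p ^ 2 → A *ᵥ u = u) {lam : ℂ}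
    (hlam : Module.End.HasEigenvalue (A.map fun r => (r : ℂ)).mulVecLin lam) (hne : lam ≠ 1) :
    ‖lam‖ < 1 := by
  obtain ⟨v, hv, hv0⟩ := hlam.exists_hasEigenvector
  have hAv : A.map (fun r => (r : ℂ)) *ᵥ v = lam • v := Module.End.mem_eigenspace_iff.1 hv
  have hS : ∑ p, ‖(A.map (fun r => (r : ℂ)) *ᵥ v) p‖ ^ 2 = ‖lam‖ ^ 2 * ∑ p, ‖v p‖ ^ 2 := by
    simp only [hAv, Pi.smul_apply, smul_eq_mul, norm_mul, mul_pow, mul_sum]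
  have hpos : 0 < ∑ p, ‖v p‖ ^ 2 := by
    obtain ⟨p, hp⟩ := Function.ne_iff.1 hv0
    exact sum_pos' (fun q _ => sq_nonneg _) ⟨p, mem_univ p, by positivity⟩
  have hle_one : ‖lam‖ ≤ 1 := by
    have := sum_norm_sq_mulVec_map_ofReal_le hle v
    rw [hS, mul_le_iff_le_one_left hpos] at this
    exact (pow_le_one_iff_of_nonneg (norm_nonneg lam) two_ne_zero).1 this
  refine hle_one.lt_of_ne fun hone => hne ?_
  have hfixv := mulVec_map_ofReal_eq_self_of_sum_norm_sq_eq hle hfix (by rw [hS, hone]; ring)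
  have : (lam - 1) • v = 0 := by rw [sub_smul, one_smul, ← hAv, hfixv, sub_self]
  exact sub_eq_zero.1 ((smul_eq_zero.1 this).resolve_right hv0)

end Complexification

theorem stmt17_general (n d : ℕ)
    (G : SimpleGraph (Fin n)) [DecidableRel G.Adj] (hG : G.Connected)
    (ε : ℝ) (hε0 : 0 < ε) (hε1 : ε < 1 / n)
    (W : Matrix (Fin n) (Fin n) ℝ)
    (hW : ∀ i j, W i j =
      if i = j then 1 - (G.neighborFinset i).card * ε
      else if G.Adj i j then ε else 0)
    (L : Fin n → Submodule ℝ (Fin d → ℝ))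
    (Pm : Fin n → Matrix (Fin d) (Fin d) ℝ)
    (hP : ∀ i, IsProjOn (fun v => (Pm i).mulVec v) (L i : Set (Fin d → ℝ)))
    (A : Matrix (Fin n × Fin d) (Fin n × Fin d) ℝ)
    (hA : ∀ p q, A p q = W p.1 q.1 * Pm p.1 p.2 q.2) :
    (∀ lam : ℂ,
      Module.End.HasEigenvalue ((A.map fun r => (r : ℂ)).mulVecLin) lam →
        lam ≠ 1 → ‖lam‖ < 1) ∧
    (∀ u : Fin n × Fin d → ℝ, A.mulVec u = u →
      ∃ h : Fin d → ℝ, (∀ i, h ∈ L i) ∧ ∀ p : Fin n × Fin d, u p = h p.2) := by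
  have hWlap : W = 1 - ε • G.lapMatrix ℝ := by
    ext i j
    rw [hW, G.one_sub_smul_lapMatrix_apply, G.card_neighborFinset_eq_degree]
  have hWc : IsConsensusMatrix G W := hWlap ▸ G.isConsensusMatrix_one_sub_smul_lapMatrix hε0
    (G.degree_mul_lt_one hε0 (by simpa using hε1))
  have hQ := fun i => (hP i).isNearestPointMap
  have henergy : ∀ u, ∑ p, (A *ᵥ u) p ^ 2 =
      ∑ i, ‖projMix (fun i z => WithLp.toLp 2 (Pm i *ᵥ z.ofLp)) W (blocks u) i‖ ^ 2 := fun u => by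
    rw [sum_sq_eq_sum_norm_sq_blocks, blocks_mulVec hA]
  have hle : ∀ u, ∑ p, (A *ᵥ u) p ^ 2 ≤ ∑ p, u p ^ 2 := fun u => by
    rw [henergy, sum_sq_eq_sum_norm_sq_blocks]
    exact sum_norm_sq_projMix_le hQ hWc.mem_doublyStochastic _
  have hfix : ∀ u, ∑ p, (A *ᵥ u) p ^ 2 = ∑ p, u p ^ 2 → A *ᵥ u = u := fun u h => by
    rw [henergy, sum_sq_eq_sum_norm_sq_blocks] at h
    exact blocks_injective (by rw [blocks_mulVec hA, projMix_eq_self_of_sum_norm_sq_eq hQ hWc hG h])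
  refine ⟨fun lam hlam hne => norm_lt_one_of_hasEigenvalue hle hfix hlam hne, fun u hu => ?_⟩
  have h := henergy u
  rw [hu, sum_sq_eq_sum_norm_sq_blocks] at h
  obtain ⟨c, hc, hblocks⟩ := exists_forall_eq_of_sum_norm_sq_projMix_eq hQ hWc hG h.symm
  exact ⟨c.ofLp, hc, fun p => congr($(hblocks p.1) p.2)⟩

theorem stmt17 (n d : ℕ) (hn : 0 < n)
    (G : SimpleGraph (Fin n)) [DecidableRel G.Adj] (hG : G.Connected)
    (ε : ℝ) (hε0 : 0 < ε) (hε1 : ε < 1 / n)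
    (W : Matrix (Fin n) (Fin n) ℝ)
    (hW : ∀ i j, W i j =
      if i = j then 1 - (G.neighborFinset i).card * ε
      else if G.Adj i j then ε else 0)
    (L : Fin n → Submodule ℝ (Fin d → ℝ))
    (Pm : Fin n → Matrix (Fin d) (Fin d) ℝ)
    (hP : ∀ i, IsProjOn (fun v => (Pm i).mulVec v) (L i : Set (Fin d → ℝ)))
    (A : Matrix (Fin n × Fin d) (Fin n × Fin d) ℝ)
    (hA : ∀ p q, A p q = W p.1 q.1 * Pm p.1 p.2 q.2) :
    (∀ lam : ℂ,
      Module.End.HasEigenvalue ((A.map fun r => (r : ℂ)).mulVecLin) lam →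
        lam ≠ 1 → ‖lam‖ < 1) ∧
    (∀ u : Fin n × Fin d → ℝ, A.mulVec u = u →
      ∃ h : Fin d → ℝ, (∀ i, h ∈ L i) ∧ ∀ p : Fin n × Fin d, u p = h p.2) :=
  stmt17_general n d G hG ε hε0 hε1 W hW L Pm hP A hA
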